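/- Let G be an MVR chain graph with vertex set V and chain components 𝒯, and let p be a strictly positive probability mass function on a finite product space ∏_{v ∈ V} S_v. If p satisfies the multivariate regression (MR) Markov property with respect to G (each independence required by MR1 and MR2 holds as a conditional independence under p), then p factorizes according to the directed acyclic graph of the chain components: for every x, p(x) = ∏_{T ∈ 𝒯} p_{T ∪ pa_D(T)}(x) / p_{pa_D(T)}(x), where p_A denotes the marginal of p on the coordinates in A and pa_D(T) is the union of the chain components that are parents of T. -/

import Mathlib

open scoped Classical

universe u

variable {V : Type u}

/-- A mixed graph: a set of directed edges and a set of bidirected edges on `V`. -/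
structure MixedGraph (V : Type u) where
  /-- `dir u v` means there is a directed edge `u → v`. -/
  dir : V → V → Prop
  /-- `bi u v` means there is a bidirected edge `u ↔ v`. -/
  bi : V → V → Prop

namespace MixedGraph

/-- The basic well-formedness conditions of a mixed graph with only directed and
bidirected edges: `bi` is symmetric and irreflexive, `dir` is irreflexive, there are no
self-loops and at most one edge between each pair of distinct vertices. -/
def IsMixed (G : MixedGraph V) : Prop :=
  (∀ u v, G.bi u v → G.bi v u) ∧
  (∀ v, ¬ G.bi v v) ∧
  (∀ v, ¬ G.dir v v) ∧
  (∀ u v, G.dir u v → ¬ G.bi u v) ∧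
  (∀ u v, G.dir u v → ¬ G.dir v u)

/-- A partially directed cycle: vertices `f 0, f 1, …, f n = f 0` (`n ≥ 2`,
`f 0, …, f (n-1)` distinct) such that every step is a directed edge `f i → f (i+1)` or a
bidirected edge, and at least one step is directed. -/
def HasPDCycle (G : MixedGraph V) : Prop :=
  ∃ (n : ℕ) (f : ℕ → V), 2 ≤ n ∧ f n = f 0 ∧
    (∀ i j, i < n → j < n → f i = f j → i = j) ∧
    (∀ i, i < n → G.dir (f i) (f (i + 1)) ∨ G.bi (f i) (f (i + 1))) ∧
    (∃ i, i < n ∧ G.dir (f i) (f (i + 1)))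

/-- An MVR chain graph: a mixed graph containing only directed and bidirected edges and
having no partially directed cycle. -/
def IsMVR (G : MixedGraph V) : Prop := G.IsMixed ∧ ¬ G.HasPDCycle

/-- `G.anc u v` : `u` is an ancestor of `v` (`u = v` or there is a directed path
`u → ⋯ → v`). -/
def anc (G : MixedGraph V) (u v : V) : Prop := Relation.ReflTransGen G.dir u v

/-- `an(S)`: the set of ancestors of members of `S`. -/
def ancSet (G : MixedGraph V) (S : Set V) : Set V := {u | ∃ s ∈ S, G.anc u s}

/-- The descendants of `v`. -/
def de (G : MixedGraph V) (v : V) : Set V := {u | G.anc v u}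

/-- The non-descendants of `v` : `V \ (de(v) ∪ {v})`. -/
def nd (G : MixedGraph V) (v : V) : Set V := {u | ¬ G.anc v u}

/-- Adjacency: some edge joins `u` and `v`. -/
def adj (G : MixedGraph V) (u v : V) : Prop := G.dir u v ∨ G.dir v u ∨ G.bi u v

/-- `f 0, …, f n` is a walk: consecutive vertices are joined by some edge. -/
def IsWalk (G : MixedGraph V) (n : ℕ) (f : ℕ → V) : Prop :=
  ∀ i, i < n → G.adj (f i) (f (i + 1))

/-- `f 0, …, f n` is a path: a walk with distinct vertices. -/
def IsPath (G : MixedGraph V) (n : ℕ) (f : ℕ → V) : Prop :=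
  G.IsWalk n f ∧ ∀ i j, i ≤ n → j ≤ n → f i = f j → i = j

/-- The nonendpoint vertex `f i` (`0 < i < n`) of a path is a collider: both incident
edges of the path have an arrowhead at `f i`, i.e. the edge from `f (i-1)` is
`f (i-1) → f i` or `f (i-1) ↔ f i`, and the edge to `f (i+1)` is `f i ← f (i+1)` or
`f i ↔ f (i+1)`. -/
def IsColliderAt (G : MixedGraph V) (f : ℕ → V) (i : ℕ) : Prop :=
  (G.dir (f (i - 1)) (f i) ∨ G.bi (f (i - 1)) (f i)) ∧
  (G.dir (f (i + 1)) (f i) ∨ G.bi (f i) (f (i + 1)))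

/-- A path between `α` and `β` is m-connecting given `Z` if every noncollider on it is
not in `Z` and every collider on it is in `an(Z)`. -/
def MConnecting (G : MixedGraph V) (Z : Set V) (α β : V) : Prop :=
  ∃ (n : ℕ) (f : ℕ → V), G.IsPath n f ∧ f 0 = α ∧ f n = β ∧
    ∀ i, 0 < i → i < n →
      (G.IsColliderAt f i → f i ∈ G.ancSet Z) ∧ (¬ G.IsColliderAt f i → f i ∉ Z)

/-- `X` and `Y` are m-separated given `Z`: no m-connecting path given `Z` joins a vertex
of `X` to a vertex of `Y`. -/
def MSep (G : MixedGraph V) (X Y Z : Set V) : Prop :=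
  ∀ α ∈ X, ∀ β ∈ Y, ¬ G.MConnecting Z α β

/-- The induced subgraph of `G` on the vertex set `A` (kept on the same vertex type:
only edges with both endpoints in `A` remain). -/
def induce (G : MixedGraph V) (A : Set V) : MixedGraph V where
  dir u v := u ∈ A ∧ v ∈ A ∧ G.dir u v
  bi u v := u ∈ A ∧ v ∈ A ∧ G.bi u v

/-- Two vertices are collider connected if joined by a path on which every nonendpoint
vertex is a collider (a single edge counts). -/
def ColliderConnected (G : MixedGraph V) (x y : V) : Prop :=
  ∃ (n : ℕ) (f : ℕ → V), 1 ≤ n ∧ G.IsPath n f ∧ f 0 = x ∧ f n = y ∧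
    ∀ i, 0 < i → i < n → G.IsColliderAt f i

end MixedGraph

/-- `Z` separates `X` from `Y` in the undirected graph with adjacency `E` : every path
from `X` to `Y` meets `Z`. -/
def UndirSep {V : Type u} (E : V → V → Prop) (X Y Z : Set V) : Prop :=
  ∀ (n : ℕ) (f : ℕ → V), (∀ i, i < n → E (f i) (f (i + 1))) →
    (∀ i j, i ≤ n → j ≤ n → f i = f j → i = j) →
    f 0 ∈ X → f n ∈ Y → ∃ i, i ≤ n ∧ f i ∈ Z

namespace MixedGraph

/-- Augmented-graph separation (m*-separation): `Z` separates `X` from `Y` in the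
augmented graph (whose edges join the collider-connected pairs) of the induced subgraph
of `G` on `an(X ∪ Y ∪ Z)`. -/
def AugSep (G : MixedGraph V) (X Y Z : Set V) : Prop :=
  UndirSep (fun a b => (G.induce (G.ancSet (X ∪ Y ∪ Z))).ColliderConnected a b) X Y Z

/-- Connectivity in the bidirected part of `G`. -/
def biConn (G : MixedGraph V) (u v : V) : Prop := Relation.ReflTransGen G.bi u v

/-- The chain component of `v`: the connected component of `v` in the bidirected part. -/
def chainComp (G : MixedGraph V) (v : V) : Set V := {u | G.biConn v u}

/-- `T` is a chain component of `G`. -/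
def IsChainComp (G : MixedGraph V) (T : Set V) : Prop := ∃ v, T = G.chainComp v

/-- The parents of a vertex: `pa_G(v) = {w : w → v}`. -/
def pa (G : MixedGraph V) (v : V) : Set V := {w | G.dir w v}

/-- The boundary of a vertex: parents and bidirected neighbours. -/
def bd (G : MixedGraph V) (v : V) : Set V := {w | G.dir w v ∨ G.bi w v}

/-- The parents of a set: `pa_G(A) = {w ∉ A : w → v for some v ∈ A}`. -/
def paSet (G : MixedGraph V) (A : Set V) : Set V := {w | w ∉ A ∧ ∃ v ∈ A, G.dir w v}

/-- `Nb_G(A)`: `A` together with all vertices joined to `A` by a bidirected edge. -/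
def Nb (G : MixedGraph V) (A : Set V) : Set V := A ∪ {w | ∃ v ∈ A, G.bi w v}

/-- The edge relation of the directed graph `D` of chain components:
`C₁ → C₂` iff they are distinct chain components and some directed edge of `G` joins a
vertex of `C₁` to a vertex of `C₂`. -/
def compRel (G : MixedGraph V) (C₁ C₂ : Set V) : Prop :=
  G.IsChainComp C₁ ∧ G.IsChainComp C₂ ∧ C₁ ≠ C₂ ∧ ∃ u ∈ C₁, ∃ v ∈ C₂, G.dir u v

/-- `pa_D(T)`: the union of the chain components that are parents of `T` in the directed
graph `D` of chain components. -/
def paD (G : MixedGraph V) (T : Set V) : Set V := {w | G.compRel (G.chainComp w) T}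

/-- `nd_D(T)`: the union of the chain components `T'` such that there is no directed path
from `T` to `T'` in the directed graph `D` of chain components. -/
def ndD (G : MixedGraph V) (T : Set V) : Set V :=
  {w | ¬ Relation.ReflTransGen G.compRel T (G.chainComp w)}

/-- Connectivity in the bidirected part of the induced subgraph on `A`. -/
def biConnIn (G : MixedGraph V) (A : Set V) (u v : V) : Prop :=
  Relation.ReflTransGen (fun a b => a ∈ A ∧ b ∈ A ∧ G.bi a b) u v

/-- `A` is connected: the bidirected part of the induced subgraph on `A` is connected
(and `A` is nonempty). -/
def ConnectedIn (G : MixedGraph V) (A : Set V) : Prop :=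
  A.Nonempty ∧ ∀ u ∈ A, ∀ v ∈ A, G.biConnIn A u v

/-- `dis_{G_A}(x)`: the connected component (district) of `x` in the bidirected part of
the induced subgraph `G_A`. -/
def disIn (G : MixedGraph V) (A : Set V) (x : V) : Set V := {y | G.biConnIn A x y}

/-- The Markov blanket `mb(x, A) = pa_G(dis_{G_A}(x)) ∪ (dis_{G_A}(x) \ {x})`. -/
def mb (G : MixedGraph V) (x : V) (A : Set V) : Set V :=
  G.paSet (G.disIn A x) ∪ (G.disIn A x \ {x})

/-- `pre(T)` relative to an order `r` on chain components: the union of all chain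
components strictly preceding `T`. -/
def pre (G : MixedGraph V) (r : Set V → Set V → Prop) (T : Set V) : Set V :=
  {v | r (G.chainComp v) T}

/-- `r` is a strict total order on the chain components of `G` that is consistent with
the directed graph `D` of chain components, i.e. `pa_D(T) ⊆ pre(T)` for all `T`. -/
def ConsistentCompOrder (G : MixedGraph V) (r : Set V → Set V → Prop) : Prop :=
  (∀ C, ¬ r C C) ∧
  (∀ C₁ C₂ C₃, r C₁ C₂ → r C₂ C₃ → r C₁ C₃) ∧
  (∀ C₁ C₂, G.IsChainComp C₁ → G.IsChainComp C₂ → C₁ = C₂ ∨ r C₁ C₂ ∨ r C₂ C₁) ∧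
  (∀ T, G.IsChainComp T → G.paD T ⊆ G.pre r T)

/-- A total order `r` on the vertices of `G` is consistent with `G` if `r x y` implies
that `y` is not an ancestor of `x`. -/
def ConsistentVertexOrder (G : MixedGraph V) (r : V → V → Prop) : Prop :=
  IsStrictTotalOrder V r ∧ ∀ x y, r x y → ¬ G.anc y x

end MixedGraph

section IndepModel

variable {V : Type u} (I : Set V → Set V → Set V → Prop)

/-- Symmetry: `X ⫫ Y | Z  ⇒  Y ⫫ X | Z`. -/
def IndepSymm : Prop := ∀ X Y Z : Set V, I X Y Z → I Y X Z

/-- Decomposition: `X ⫫ Y ∪ W | Z  ⇒  X ⫫ Y | Z`. -/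
def IndepDecomp : Prop := ∀ X Y W Z : Set V, I X (Y ∪ W) Z → I X Y Z

/-- Weak union: `X ⫫ Y ∪ W | Z  ⇒  X ⫫ Y | Z ∪ W`. -/
def IndepWeakUnion : Prop := ∀ X Y W Z : Set V, I X (Y ∪ W) Z → I X Y (Z ∪ W)

/-- Contraction: `X ⫫ Y | Z ∪ W` and `X ⫫ W | Z` imply `X ⫫ Y ∪ W | Z`. -/
def IndepContraction : Prop := ∀ X Y W Z : Set V, I X Y (Z ∪ W) → I X W Z → I X (Y ∪ W) Z

/-- Composition: `X ⫫ Y | Z` and `X ⫫ W | Z` imply `X ⫫ Y ∪ W | Z`. -/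
def IndepComposition : Prop := ∀ X Y W Z : Set V, I X Y Z → I X W Z → I X (Y ∪ W) Z

/-- A semi-graphoid satisfies symmetry, decomposition, weak union and contraction. -/
def SemiGraphoid : Prop := IndepSymm I ∧ IndepDecomp I ∧ IndepWeakUnion I ∧ IndepContraction I

/-- A compositional semi-graphoid additionally satisfies composition. -/
def CompositionalSemiGraphoid : Prop := SemiGraphoid I ∧ IndepComposition I

variable (G : MixedGraph V)

/-- The global Markov property via m-separation: whenever `X` and `Y` are m-separated
given `Z` in `G` (for pairwise disjoint `X, Y, Z` with `X, Y` nonempty), `⟨X, Y | Z⟩ ∈ ℐ`. -/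
def GlobalMarkovM : Prop :=
  ∀ X Y Z : Set V, X.Nonempty → Y.Nonempty →
    Disjoint X Y → Disjoint X Z → Disjoint Y Z → G.MSep X Y Z → I X Y Z

/-- The global Markov property via augmented-graph separation: whenever `Z` separates `X`
from `Y` in the augmented graph of the induced subgraph of `G` on `an(X ∪ Y ∪ Z)` (for
pairwise disjoint `X, Y, Z` with `X, Y` nonempty), `⟨X, Y | Z⟩ ∈ ℐ`. -/
def GlobalMarkovAug : Prop :=
  ∀ X Y Z : Set V, X.Nonempty → Y.Nonempty →
    Disjoint X Y → Disjoint X Z → Disjoint Y Z → G.AugSep X Y Z → I X Y Z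

/-- The block-recursive Markov property of type IV. -/
def TypeIVMarkov : Prop :=
  ∀ T : Set V, G.IsChainComp T →
    (I T (G.ndD T \ G.paD T) (G.paD T)) ∧
    (∀ A : Set V, A ⊆ T → I A (G.paD T \ G.paSet A) (G.paSet A)) ∧
    (∀ A : Set V, A ⊆ T → G.ConnectedIn A → I A (T \ G.Nb A) (G.paD T))

/-- The multivariate regression (MR) Markov property with respect to the order `r` on the
chain components: (MR1) for connected `A ⊆ T`, `A ⫫ pre(T) \ pa_G(A) | pa_G(A)`; (MR2)
distinct connected components `A₁, A₂` of `A ⊆ T` satisfy `A₁ ⫫ A₂ | pre(T)`. -/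
def MRMarkov (r : Set V → Set V → Prop) : Prop :=
  ∀ T : Set V, G.IsChainComp T → ∀ A : Set V, A ⊆ T →
    (G.ConnectedIn A → I A (G.pre r T \ G.paSet A) (G.paSet A)) ∧
    (∀ x ∈ A, ∀ y ∈ A, G.disIn A x ≠ G.disIn A y →
      I (G.disIn A x) (G.disIn A y) (G.pre r T))

/-- The ordered local Markov property with respect to a total vertex order `r` : for every
vertex `x` and every ancestrally closed `A` with `x ∈ A ⊆ pre_{G,≺}(x)`,
`{x} ⫫ A \ (mb(x,A) ∪ {x}) | mb(x,A)`. -/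
def OrderedLocalMarkov (r : V → V → Prop) : Prop :=
  ∀ (x : V) (A : Set V), G.ancSet A = A → x ∈ A → A ⊆ {v | r v x ∨ v = x} →
    I {x} (A \ (G.mb x A ∪ {x})) (G.mb x A)

/-- The alternative local Markov property: for every vertex `v`,
`{v} ⫫ nd(v) \ bd(v) | pa_G(v)`. -/
def AltLocalMarkov : Prop :=
  ∀ v : V, I {v} (G.nd v \ G.bd v) (G.pa v)

end IndepModel

section Probability

variable {V : Type u} [Fintype V] [DecidableEq V] {S : V → Type} [∀ v, Fintype (S v)]

/-- The marginal of a pmf `p` on `∏ v, S v` over the coordinates in `A`, evaluated at the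
configuration `x` : the sum of `p` over all configurations agreeing with `x` on `A`. -/
noncomputable def marginal (p : (∀ v, S v) → ℝ) (A : Set V) (x : ∀ v, S v) : ℝ :=
  ∑ y : ∀ v, S v, if ∀ v ∈ A, y v = x v then p y else 0

/-- Conditional independence of the coordinate tuples on `X` and on `Y` given those on
`Z`, under the pmf `p` : `p_{X∪Y∪Z}(x) · p_Z(x) = p_{X∪Z}(x) · p_{Y∪Z}(x)` for all `x`. -/
def CondIndep (p : (∀ v, S v) → ℝ) (X Y Z : Set V) : Prop :=
  ∀ x : ∀ v, S v,
    marginal p (X ∪ Y ∪ Z) x * marginal p Z x = marginal p (X ∪ Z) x * marginal p (Y ∪ Z) x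

end Probability

/-!
MR1 applied to a whole chain component `T`, which is connected, gives
`T ⫫ pre(T) \ pa_G(T) | pa_G(T)`. Since `pa_G(T) ⊆ pa_D(T) ⊆ pre(T)`, weak union and
decomposition turn this into `p(x_T | x_{pa_D(T)}) = p(x_T | x_{pre(T)})`, and the product of
the right-hand sides over the components, taken in the order `r`, telescopes by the chain
rule to `p(x)`.
-/

lemma Finset.exists_greatest_of_trichotomous {α : Type*} [Finite α] {r : α → α → Prop}
    (hirr : ∀ a, ¬ r a a) (htrans : ∀ a b c, r a b → r b c → r a c) {s : Finset α}
    (hs : s.Nonempty) (htri : ∀ a ∈ s, ∀ b ∈ s, a = b ∨ r a b ∨ r b a) :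
    ∃ m ∈ s, ∀ a ∈ s, a ≠ m → r a m := by
  have : IsTrans α (flip r) := ⟨fun a b c hab hbc => htrans c b a hbc hab⟩
  have : Std.Irrefl (flip r) := ⟨hirr⟩
  obtain ⟨m, hm, hmax⟩ := (Finite.wellFounded_of_trans_of_irrefl (flip r)).has_min (s : Set α) hs
  exact ⟨m, hm, fun a ha hne => ((htri a ha m hm).resolve_left hne).resolve_right (hmax a ha)⟩

section Marginal

variable {V : Type u} [Fintype V] [DecidableEq V] {S : V → Type} [∀ v, Fintype (S v)]
  {p : (∀ v, S v) → ℝ}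

open Finset

lemma marginal_eq_sum_filter (p : (∀ v, S v) → ℝ) (A : Set V) (x : ∀ v, S v) :
    marginal p A x = ∑ y ∈ univ.filter (fun y => ∀ v ∈ A, y v = x v), p y :=
  (sum_filter _ _).symm

lemma marginal_pos (hpos : ∀ x, 0 < p x) (A : Set V) (x : ∀ v, S v) : 0 < marginal p A x := by
  rw [marginal_eq_sum_filter]
  exact sum_pos (fun y _ => hpos y) ⟨x, by simp⟩

lemma marginal_congr {A : Set V} {x y : ∀ v, S v} (h : ∀ v ∈ A, y v = x v) :
    marginal p A y = marginal p A x := by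
  simp only [marginal_eq_sum_filter]
  congr 1
  ext z
  simp +contextual [h]

lemma marginal_univ (p : (∀ v, S v) → ℝ) (x : ∀ v, S v) : marginal p Set.univ x = p x := by
  simp [marginal, ← funext_iff]

lemma marginal_empty (hsum : ∑ x : ∀ v, S v, p x = 1) (x : ∀ v, S v) :
    marginal p (∅ : Set V) x = 1 := by
  simp [marginal_eq_sum_filter, hsum]

lemma marginal_eq_sum_marginal_union {A B : Set V} (hAB : Disjoint A B) (x : ∀ v, S v) :
    marginal p A x =
      ∑ y ∈ univ.filter (fun y => ∀ v ∉ B, y v = x v), marginal p (A ∪ B) y := by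
  simp only [marginal_eq_sum_filter]
  -- each `z` agreeing with `x` on `A` is counted exactly once, for `y = B.piecewise z x`
  rw [sum_comm' (t' := univ.filter (fun z => ∀ v ∈ A, z v = x v))
    (s' := fun z => {B.piecewise z x})]
  · simp
  intro y z
  simp only [mem_filter, mem_univ, true_and, mem_singleton]
  constructor
  · rintro ⟨hyx, hzy⟩
    refine ⟨funext fun v => ?_, fun v hv => ?_⟩
    · by_cases hv : v ∈ B
      · rw [Set.piecewise_eq_of_mem _ _ _ hv, hzy v (Or.inr hv)]
      · rw [Set.piecewise_eq_of_notMem _ _ _ hv, hyx v hv]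
    · rw [hzy v (Or.inl hv), hyx v (hAB.notMem_of_mem_left hv)]
  · rintro ⟨rfl, hzx⟩
    refine ⟨fun v hv => Set.piecewise_eq_of_notMem _ _ _ hv, fun v hv => ?_⟩
    by_cases hvB : v ∈ B
    · rw [Set.piecewise_eq_of_mem _ _ _ hvB]
    · rw [Set.piecewise_eq_of_notMem _ _ _ hvB, hzx v (hv.resolve_right hvB)]

lemma CondIndep.marginal_div_marginal_eq (hpos : ∀ x, 0 < p x) {A B C D : Set V}
    (h : CondIndep p A (C \ B) B) (hBD : B ⊆ D) (hDC : D ⊆ C) (hA : Disjoint A (C \ D))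
    (x : ∀ v, S v) :
    marginal p (A ∪ D) x / marginal p D x = marginal p (A ∪ B) x / marginal p B x := by
  have hC : ∀ y, marginal p (A ∪ C) y * marginal p B y =
      marginal p (A ∪ B) y * marginal p C y := by
    intro y
    simpa only [Set.union_assoc, Set.sdiff_union_of_subset (hBD.trans hDC)] using h y
  generalize hE : C \ D = E at hA
  have hDE : Disjoint D E := hE ▸ Set.disjoint_sdiff_right
  have hDEC : D ∪ E = C := hE ▸ Set.union_sdiff_cancel hDC
  set F := univ.filter (fun y : ∀ v, S v => ∀ v ∉ E, y v = x v)
  have hAD : marginal p (A ∪ D) x = ∑ y ∈ F, marginal p (A ∪ C) y := by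
    rw [marginal_eq_sum_marginal_union (hA.union_left hDE), Set.union_assoc, hDEC]
  have hD : marginal p D x = ∑ y ∈ F, marginal p C y := by
    rw [marginal_eq_sum_marginal_union hDE, hDEC]
  have hB : ∀ y ∈ F, marginal p B y = marginal p B x := fun y hy =>
    marginal_congr fun v hv => (mem_filter.mp hy).2 v (hDE.notMem_of_mem_left (hBD hv))
  have hAB : ∀ y ∈ F, marginal p (A ∪ B) y = marginal p (A ∪ B) x := fun y hy =>
    marginal_congr fun v hv => (mem_filter.mp hy).2 v <|
      hv.elim (fun hvA => hA.notMem_of_mem_left hvA) fun hvB => hDE.notMem_of_mem_left (hBD hvB)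
  rw [div_eq_div_iff (marginal_pos hpos _ x).ne' (marginal_pos hpos _ x).ne']
  calc marginal p (A ∪ D) x * marginal p B x
      = ∑ y ∈ F, marginal p (A ∪ C) y * marginal p B y := by
        rw [hAD, sum_mul]
        exact sum_congr rfl fun y hy => by rw [hB y hy]
    _ = ∑ y ∈ F, marginal p (A ∪ B) y * marginal p C y := sum_congr rfl fun y _ => hC y
    _ = marginal p (A ∪ B) x * marginal p D x := by
        rw [hD, mul_sum]
        exact sum_congr rfl fun y hy => by rw [hAB y hy]

lemma marginal_sUnion_eq_prod_marginal_div (hpos : ∀ x, 0 < p x)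
    (hsum : ∑ x : ∀ v, S v, p x = 1) {r : Set V → Set V → Prop} (hirr : ∀ T, ¬ r T T)
    (htrans : ∀ T₁ T₂ T₃, r T₁ T₂ → r T₂ T₃ → r T₁ T₃) (pre : Set V → Set V) (x : ∀ v, S v)
    (s : Finset (Set V)) (htri : ∀ T ∈ s, ∀ T' ∈ s, T = T' ∨ r T T' ∨ r T' T)
    (hpre : ∀ T ∈ s, pre T = ⋃₀ ↑(s.filter (r · T))) :
    marginal p (⋃₀ ↑s) x = ∏ T ∈ s, marginal p (T ∪ pre T) x / marginal p (pre T) x := by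
  induction s using Finset.strongInduction with
  | H s ih =>
  rcases s.eq_empty_or_nonempty with rfl | hs
  · simp [marginal_empty hsum]
  obtain ⟨m, hm, hmax⟩ := exists_greatest_of_trichotomous hirr htrans hs htri
  have hpre_m : pre m = ⋃₀ ↑(s.erase m) := by
    rw [hpre m hm]
    congr 2
    ext T
    simp only [mem_filter, mem_erase]
    exact ⟨fun ⟨hT, hTm⟩ => ⟨fun h => hirr m (h ▸ hTm), hT⟩, fun ⟨hne, hT⟩ => ⟨hT, hmax T hT hne⟩⟩
  have hpre' : ∀ T ∈ s.erase m, pre T = ⋃₀ ↑((s.erase m).filter (r · T)) := by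
    intro T hT
    have hTm := hmax T (mem_of_mem_erase hT) (ne_of_mem_erase hT)
    rw [hpre T (mem_of_mem_erase hT), filter_erase, erase_eq_of_notMem]
    exact fun h => hirr m (htrans _ _ _ (mem_filter.mp h).2 hTm)
  have hunion : ⋃₀ (↑s : Set (Set V)) = m ∪ pre m := by
    rw [hpre_m, ← Set.sUnion_insert, ← coe_insert, insert_erase hm]
  rw [← mul_prod_erase s _ hm, ← ih _ (erase_ssubset hm)
    (fun T hT T' hT' => htri T (mem_of_mem_erase hT) T' (mem_of_mem_erase hT')) hpre',
    ← hpre_m, hunion, div_mul_cancel₀ _ (marginal_pos hpos _ x).ne']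

end Marginal

namespace MixedGraph

variable {V : Type u} {G : MixedGraph V}

lemma mem_chainComp_self (G : MixedGraph V) (v : V) : v ∈ G.chainComp v :=
  Relation.ReflTransGen.refl

lemma chainComp_eq_of_mem [Std.Symm G.bi] {u v : V} (h : u ∈ G.chainComp v) :
    G.chainComp u = G.chainComp v := by
  have hvu : Relation.ReflTransGen G.bi v u := h
  have huv : Relation.ReflTransGen G.bi u v := Std.Symm.symm _ _ hvu
  ext w
  exact ⟨fun hw => hvu.trans hw, fun hw => huv.trans hw⟩

lemma biConnIn_chainComp_of_mem {u v : V} (h : u ∈ G.chainComp v) :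
    G.biConnIn (G.chainComp v) v u := by
  induction h with
  | refl => exact Relation.ReflTransGen.refl
  | tail hvb hbc ih => exact ih.tail ⟨hvb, hvb.tail hbc, hbc⟩

lemma connectedIn_chainComp [Std.Symm G.bi] (v : V) : G.ConnectedIn (G.chainComp v) := by
  have : Std.Symm (fun a b => a ∈ G.chainComp v ∧ b ∈ G.chainComp v ∧ G.bi a b) :=
    ⟨fun a b ⟨ha, hb, hab⟩ => ⟨hb, ha, Std.Symm.symm a b hab⟩⟩
  refine ⟨⟨v, G.mem_chainComp_self v⟩, fun u hu w hw => ?_⟩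
  have huv : G.biConnIn (G.chainComp v) u v :=
    Std.Symm.symm (r := Relation.ReflTransGen _) _ _ (biConnIn_chainComp_of_mem hu)
  exact huv.trans (biConnIn_chainComp_of_mem hw)

lemma paSet_subset_paD {T : Set V} (hT : G.IsChainComp T) : G.paSet T ⊆ G.paD T := by
  rintro w ⟨hwT, v, hv, hwv⟩
  exact ⟨⟨w, rfl⟩, hT, fun h => hwT (h ▸ G.mem_chainComp_self w),
    w, G.mem_chainComp_self w, v, hv, hwv⟩

lemma disjoint_pre [Std.Symm G.bi] {r : Set V → Set V → Prop} (hirr : ∀ T, ¬ r T T)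
    {T : Set V} (hT : G.IsChainComp T) : Disjoint T (G.pre r T) := by
  obtain ⟨v, rfl⟩ := hT
  exact Set.disjoint_left.mpr fun w hw hwpre => hirr _ (chainComp_eq_of_mem hw ▸ hwpre)

variable [Fintype V]

open Finset

lemma isChainComp_of_mem_image_chainComp {T : Set V} (hT : T ∈ univ.image G.chainComp) :
    G.IsChainComp T := by
  obtain ⟨v, -, rfl⟩ := mem_image.mp hT
  exact ⟨v, rfl⟩

lemma sUnion_image_chainComp : ⋃₀ ↑(univ.image G.chainComp) = (Set.univ : Set V) :=
  Set.eq_univ_of_forall fun v =>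
    ⟨_, mem_coe.mpr (mem_image_of_mem _ (mem_univ v)), G.mem_chainComp_self v⟩

lemma pre_eq_sUnion [Std.Symm G.bi] (r : Set V → Set V → Prop) (T : Set V) :
    G.pre r T = ⋃₀ ↑((univ.image G.chainComp).filter (r · T)) := by
  ext v
  simp only [pre, Set.mem_ofPred_eq, Set.mem_sUnion, coe_filter, mem_image, mem_univ, true_and]
  constructor
  · exact fun h => ⟨G.chainComp v, ⟨⟨v, rfl⟩, h⟩, G.mem_chainComp_self v⟩
  · rintro ⟨_, ⟨⟨u, rfl⟩, hu⟩, hv⟩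
    rwa [chainComp_eq_of_mem hv]

end MixedGraph

section Factorization

variable {V : Type u} [Fintype V] [DecidableEq V] {S : V → Type} [∀ v, Fintype (S v)]
  {p : (∀ v, S v) → ℝ} {G : MixedGraph V} {r : Set V → Set V → Prop}

lemma MRMarkov.marginal_div_paD_eq_pre [Std.Symm G.bi] (hpos : ∀ x, 0 < p x)
    (hr : G.ConsistentCompOrder r) (hMR : MRMarkov (fun X Y Z => CondIndep p X Y Z) G r)
    {T : Set V} (hT : G.IsChainComp T) (x : ∀ v, S v) :
    marginal p (T ∪ G.paD T) x / marginal p (G.paD T) x =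
      marginal p (T ∪ G.pre r T) x / marginal p (G.pre r T) x := by
  obtain ⟨v, rfl⟩ := hT
  have hCI := (hMR _ ⟨v, rfl⟩ _ subset_rfl).1 (G.connectedIn_chainComp v)
  have hpa := G.paSet_subset_paD ⟨v, rfl⟩
  have hpaD := hr.2.2.2 _ ⟨v, rfl⟩
  rw [hCI.marginal_div_marginal_eq hpos hpa hpaD
      ((G.disjoint_pre hr.1 ⟨v, rfl⟩).mono_right Set.sdiff_subset),
    hCI.marginal_div_marginal_eq hpos (hpa.trans hpaD) subset_rfl (by simp)]

end Factorization

theorem factorization_over_component_dag_general {V : Type u} [Fintype V] [DecidableEq V]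
    (G : MixedGraph V) (hG : G.IsMVR)
    (S : V → Type) [∀ v, Fintype (S v)]
    (p : (∀ v, S v) → ℝ) (hpos : ∀ x, 0 < p x) (hsum : ∑ x : ∀ v, S v, p x = 1)
    (r : Set V → Set V → Prop) (hr : G.ConsistentCompOrder r)
    (hMR : MRMarkov (fun X Y Z => CondIndep p X Y Z) G r) :
    ∀ x : ∀ v, S v,
      p x = ∏ T ∈ Finset.univ.image (fun v => G.chainComp v),
        marginal p (T ∪ G.paD T) x / marginal p (G.paD T) x := by
  intro x
  have : Std.Symm G.bi := ⟨hG.1.1⟩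
  have hcomp : ∀ T ∈ Finset.univ.image G.chainComp, G.IsChainComp T := fun T hT =>
    G.isChainComp_of_mem_image_chainComp hT
  rw [Finset.prod_congr rfl fun T hT => hMR.marginal_div_paD_eq_pre hpos hr (hcomp T hT) x,
    ← marginal_sUnion_eq_prod_marginal_div hpos hsum hr.1 hr.2.1 (G.pre r) x _
      (fun T hT T' hT' => hr.2.2.1 T T' (hcomp T hT) (hcomp T' hT'))
      (fun T _ => G.pre_eq_sUnion r T),
    G.sUnion_image_chainComp, marginal_univ]

/-- Let `G` be an MVR chain graph on a finite vertex set `V` and `p` a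
strictly positive pmf on the finite product space `∏ v, S v`. If `p` satisfies the
multivariate regression (MR) Markov property with respect to `G` (each independence
required by MR1 and MR2 holds as a conditional independence under `p`), then `p`
factorizes according to the directed acyclic graph of the chain components:
`p(x) = ∏_{T ∈ 𝒯} p_{T ∪ pa_D(T)}(x) / p_{pa_D(T)}(x)`. -/
theorem factorization_over_component_dag {V : Type u} [Fintype V] [DecidableEq V]
    (G : MixedGraph V) (hG : G.IsMVR)
    (S : V → Type) [∀ v, Fintype (S v)] [∀ v, Nonempty (S v)]
    (p : (∀ v, S v) → ℝ) (hpos : ∀ x, 0 < p x) (hsum : ∑ x : ∀ v, S v, p x = 1)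
    (r : Set V → Set V → Prop) (hr : G.ConsistentCompOrder r)
    (hMR : MRMarkov (fun X Y Z => CondIndep p X Y Z) G r) :
    ∀ x : ∀ v, S v,
      p x = ∏ T ∈ Finset.univ.image (fun v => G.chainComp v),
        marginal p (T ∪ G.paD T) x / marginal p (G.paD T) x :=
  factorization_over_component_dag_general G hG S p hpos hsum r hr hMR
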